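/- arXiv:2208.04375 — 2 statements merged into one kernel-verified Lean document; each statement's English description precedes it below -/
import Mathlib

section
/- Suppose 0 < ε, 0 < μ, 0 < α, 0 < ρ with √α·μ ≤ √(ρε), and let θ₂ = √(ρα)/(2√ε). If a, b : [0,1] → ℝ satisfy |a(x)| ≥ α, b(x) ≥ ρ|a(x)| for all x, and a(x) ≤ -α on the relevant interval, then for all x, ε·θ₂² - μ·a(x)·θ₂ - b(x) ≤ 0. -/
set_option maxHeartbeats 1000000 in
theorem barrier_left_weak_convection (ε μ α ρ θ₂ : ℝ)
    (hε : 0 < ε) (hμ : 0 < μ) (hα : 0 < α) (hρ : 0 < ρ)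
    (hcase : Real.sqrt α * μ ≤ Real.sqrt (ρ * ε))
    (hθ : θ₂ = Real.sqrt (ρ * α) / (2 * Real.sqrt ε))
    (a b : ℝ → ℝ)
    (ha : ∀ x ∈ Set.Icc (0 : ℝ) 1, α ≤ |a x|)
    (hb : ∀ x ∈ Set.Icc (0 : ℝ) 1, ρ * |a x| ≤ b x)
    (haneg : ∀ x ∈ Set.Icc (0 : ℝ) 1, a x ≤ -α) :
    ∀ x ∈ Set.Icc (0 : ℝ) 1, ε * θ₂ ^ 2 - μ * a x * θ₂ - b x ≤ 0 := by
  intro x hx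
  set s := Real.sqrt ε with hs
  set p := Real.sqrt ρ with hp
  set q := Real.sqrt α with hq
  have hs2 : s ^ 2 = ε := Real.sq_sqrt hε.le
  have hp2 : p ^ 2 = ρ := Real.sq_sqrt hρ.le
  have hq2 : q ^ 2 = α := Real.sq_sqrt hα.le
  have hspos : 0 < s := Real.sqrt_pos.2 hε
  have hppos : 0 < p := Real.sqrt_pos.2 hρ
  have hqpos : 0 < q := Real.sqrt_pos.2 hα
  have hρα : Real.sqrt (ρ * α) = p * q := Real.sqrt_mul hρ.le α
  have hρε : Real.sqrt (ρ * ε) = p * s := Real.sqrt_mul hρ.le ε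
  have hθ2 : 2 * s * θ₂ = p * q := by
    rw [hθ, hρα]; field_simp
  have hcase' : q * μ ≤ p * s := by rwa [hρε] at hcase
  have habs : |a x| = -a x := abs_of_neg (lt_of_le_of_lt (haneg x hx) (by linarith))
  have ha' : α ≤ -a x := by have := ha x hx; rwa [habs] at this
  have hb' : ρ * (-a x) ≤ b x := by have := hb x hx; rwa [habs] at this
  have hθpos : 0 < θ₂ := by
    rw [hθ, hρα]; positivity
  have hsq : 4 * (ε * θ₂ ^ 2) = ρ * α := by
    have : (2 * s * θ₂) ^ 2 = (p * q) ^ 2 := by rw [hθ2]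
    nlinarith [this]
  have h1 : μ * (2 * s * θ₂) ≤ p * (p * s) := by
    rw [hθ2]
    nlinarith [mul_le_mul_of_nonneg_left hcase' hμ.le, mul_pos hμ hqpos]
  have h2 : 2 * μ * θ₂ ≤ ρ := by
    rw [← hp2]
    have h1' : (2 * μ * θ₂) * s ≤ p ^ 2 * s := by nlinarith [h1]
    exact le_of_mul_le_mul_right h1' hspos
  have h3 : μ * (-a x) * θ₂ ≤ ρ / 2 * (-a x) := by
    nlinarith [mul_le_mul_of_nonneg_right h2 (le_trans hα.le ha')]
  have h4 : -(μ * a x * θ₂) = μ * (-a x) * θ₂ := by ring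
  linarith [hsq, h3, hb', mul_pos hρ hα, mul_le_mul_of_nonneg_left ha' (by linarith : (0:ℝ) ≤ ρ / 2)]
end

section
/- Let 0 < ε, 0 < μ, 0 < α, 0 < ρ with √α μ ≤ √(ρε), and let θ₂ = √(ρα)/(2√ε): if a_i ≤ -α, b_i ≥ ρ|a_i|, and h_i, h_{i+1} > 0, then 2εθ₂²·h_{i+1}/(h_i+h_{i+1}) - μ a_i θ₂ (1+θ₂h_{i+1}) - b_i(1+θ₂h_{i+1}) ≤ 0. -/
theorem discrete_barrier_inequality (ε μ α ρ θ₂ a b hi hip : ℝ)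
    (hε : 0 < ε) (hμ : 0 < μ) (hα : 0 < α) (hρ : 0 < ρ)
    (hcase : Real.sqrt α * μ ≤ Real.sqrt (ρ * ε))
    (hθ : θ₂ = Real.sqrt (ρ * α) / (2 * Real.sqrt ε))
    (ha : a ≤ -α) (hb : ρ * |a| ≤ b) (hhi : 0 < hi) (hhip : 0 < hip) :
    2 * ε * θ₂ ^ 2 * hip / (hi + hip) - μ * a * θ₂ * (1 + θ₂ * hip)
      - b * (1 + θ₂ * hip) ≤ 0 := by
  have hse : (0:ℝ) < Real.sqrt ε := Real.sqrt_pos.mpr hε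
  have hθ0 : 0 ≤ θ₂ := by
    rw [hθ]; positivity
  have k1 : 2 * ε * θ₂ ^ 2 = ρ * α / 2 := by
    rw [hθ, div_pow, mul_pow]
    rw [Real.sq_sqrt (by positivity : (0:ℝ) ≤ ρ * α),
        Real.sq_sqrt hε.le]
    field_simp
  have k2 : μ * θ₂ ≤ ρ / 2 := by
    have h1 : Real.sqrt ρ * (Real.sqrt α * μ) ≤ Real.sqrt ρ * Real.sqrt (ρ * ε) := by
      exact mul_le_mul_of_nonneg_left hcase (Real.sqrt_nonneg ρ)
    have h2 : Real.sqrt ρ * Real.sqrt α = Real.sqrt (ρ * α) :=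
      (Real.sqrt_mul hρ.le α).symm
    have h3 : Real.sqrt ρ * Real.sqrt (ρ * ε) = ρ * Real.sqrt ε := by
      rw [Real.sqrt_mul hρ.le ε, ← mul_assoc, Real.mul_self_sqrt hρ.le]
    have h4 : Real.sqrt (ρ * α) * μ ≤ ρ * Real.sqrt ε := by
      nlinarith [h1]
    rw [hθ]
    have he : μ * (Real.sqrt (ρ * α) / (2 * Real.sqrt ε)) = μ * Real.sqrt (ρ * α) / (2 * Real.sqrt ε) := by ring
    rw [he, div_le_div_iff₀ (by positivity) (by norm_num : (0:ℝ) < 2)]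
    nlinarith [h4, hse]
  have habs : |a| = -a := abs_of_neg (by linarith)
  have hb' : ρ * (-a) ≤ b := by rw [habs] at hb; exact hb
  have hbpos : 0 ≤ b := le_trans (by nlinarith) hb'
  have hfrac : hip / (hi + hip) ≤ 1 := by
    rw [div_le_one (by linarith)]; linarith
  have hfrac0 : 0 ≤ hip / (hi + hip) := by positivity
  have key : 2 * ε * θ₂ ^ 2 * hip / (hi + hip) ≤ ρ * α / 2 := by
    rw [mul_div_assoc, k1]
    nlinarith [mul_le_mul_of_nonneg_left hfrac (show (0:ℝ) ≤ ρ * α / 2 by positivity)]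
  have hma : α ≤ -a := by linarith
  have h5 : μ * (-a) * θ₂ ≤ ρ * (-a) / 2 := by nlinarith [k2, hma, hα]
  have h6 : 0 ≤ θ₂ * hip := by positivity
  nlinarith [key, h5, hb', h6, hbpos, mul_le_mul_of_nonneg_right h5 (by linarith : (0:ℝ) ≤ 1 + θ₂ * hip), mul_le_mul_of_nonneg_right hb' (by linarith : (0:ℝ) ≤ 1 + θ₂ * hip)]
end
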